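/- Let γ > 0, c > 0 and α be real numbers, and set p = 1 + γ/2. Then the function r ↦ (∫_{r}^{∞} exp(-c·t^p) dt) · (1+r)^{-α} · exp(c·r^p) is integrable on the interval (1, ∞) if and only if α > 1 - γ/2. -/

import Mathlib

/-!
Write `G r = exp (c r^p) ∫_r^∞ exp (-c t^p) dt`. The weighted integrand `t^(p-1) exp (-c t^p)` has
the explicit primitive `-exp (-c t^p) / (c p)`; inserting the weight `(t/r)^(p-1) ≥ 1` on `(r, ∞)`
and `(t/2r)^(p-1) ≤ 1` on `(r, 2r]` yields `G r ≍ r^(1-p)` for `r ≥ 1`. Since also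
`(1 + r)^(-α) ≍ r^(-α)` there, the integrand is `≍ r^(1-p-α)`, which is integrable on `(1, ∞)`
exactly when `1 - p - α < -1`, i.e. `α > 1 - γ/2`.
-/

open MeasureTheory Filter Real Set Asymptotics Topology

section Comparison

variable {X E F : Type*} [MeasurableSpace X] [NormedAddCommGroup E] [NormedAddCommGroup F]
  {μ : Measure X} {s : Set X} {f : X → E} {g : X → F}

theorem Asymptotics.IsBigO.integrableOn (h : f =O[𝓟 s] g) (hs : MeasurableSet s)
    (hf : AEStronglyMeasurable f (μ.restrict s)) (hg : IntegrableOn g s μ) :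
    IntegrableOn f s μ := by
  obtain ⟨C, hC⟩ := h.bound
  exact (hg.norm.const_mul C).mono' hf ((ae_restrict_mem hs).mono (eventually_principal.1 hC))

theorem Asymptotics.IsTheta.integrableOn_iff (h : f =Θ[𝓟 s] g) (hs : MeasurableSet s)
    (hf : AEStronglyMeasurable f (μ.restrict s)) (hg : AEStronglyMeasurable g (μ.restrict s)) :
    IntegrableOn f s μ ↔ IntegrableOn g s μ :=
  ⟨h.2.integrableOn hs hg, h.1.integrableOn hs hf⟩

end Comparison

theorem isTheta_one_add_rpow (β : ℝ) :
    (fun r : ℝ => (1 + r) ^ β) =Θ[𝓟 (Ioi 1)] fun r => r ^ β := by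
  have h₁ : ∀ᶠ r : ℝ in 𝓟 (Ioi 1), 1 < r := mem_principal_self _
  refine IsTheta.rpow (h₁.mono fun r (hr : 1 < r) => by simp only [Pi.zero_apply]; linarith)
    (h₁.mono fun r (hr : 1 < r) => by simp only [Pi.zero_apply]; linarith)
    ⟨.of_bound 2 (h₁.mono fun r hr => ?_), .of_bound' (h₁.mono fun r hr => ?_)⟩ <;>
  · rw [norm_of_nonneg (by linarith), norm_of_nonneg (by linarith)]
    linarith

theorem antitoneOn_setIntegral_Ioi {f : ℝ → ℝ} {s : Set ℝ} (hf₀ : ∀ t, 0 ≤ f t)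
    (hf : ∀ r ∈ s, IntegrableOn f (Ioi r)) : AntitoneOn (fun r => ∫ t in Ioi r, f t) s :=
  fun a ha _ _ hab =>
    setIntegral_mono_set (hf a ha) (Eventually.of_forall hf₀) (Ioi_subset_Ioi hab).eventuallyLE

theorem rpow_one_sub_mul_rpow_sub_one {a b : ℝ} (ha : 0 < a) (hb : 0 ≤ b) (p : ℝ) :
    a ^ (1 - p) * b ^ (p - 1) = (b / a) ^ (p - 1) := by
  rw [div_rpow hb ha.le, show 1 - p = -(p - 1) by ring, rpow_neg ha.le, div_eq_inv_mul]

theorem one_le_rpow_one_sub_mul_rpow_sub_one {a b p : ℝ} (hp : 1 ≤ p) (ha : 0 < a) (hab : a ≤ b) :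
    1 ≤ a ^ (1 - p) * b ^ (p - 1) := by
  rw [rpow_one_sub_mul_rpow_sub_one ha (ha.le.trans hab)]
  exact one_le_rpow ((one_le_div ha).2 hab) (by linarith)

theorem rpow_one_sub_mul_rpow_sub_one_le_one {a b p : ℝ} (hp : 1 ≤ p) (hb : 0 ≤ b) (hba : b ≤ a)
    (ha : 0 < a) : a ^ (1 - p) * b ^ (p - 1) ≤ 1 := by
  rw [rpow_one_sub_mul_rpow_sub_one ha hb]
  exact rpow_le_one (div_nonneg hb ha.le) ((div_le_one ha).2 hba) (by linarith)

section StretchedExponential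

variable {c p r : ℝ}

theorem hasDerivAt_neg_exp_neg_mul_rpow_div (hc : c ≠ 0) (hp : p ≠ 0) {t : ℝ} (ht : 0 < t) :
    HasDerivAt (fun t => -exp (-c * t ^ p) / (c * p)) (t ^ (p - 1) * exp (-c * t ^ p)) t := by
  have := (((hasDerivAt_rpow_const (p := p) (Or.inl ht.ne')).const_mul (-c)).exp.neg).div_const
    (c * p)
  exact this.congr_deriv (by field_simp)

theorem tendsto_neg_exp_neg_mul_rpow_div (hc : 0 < c) (hp : 0 < p) :
    Tendsto (fun t => -exp (-c * t ^ p) / (c * p)) atTop (𝓝 0) := by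
  have := tendsto_exp_atBot.comp ((tendsto_rpow_atTop hp).const_mul_atTop_of_neg (neg_lt_zero.2 hc))
  simpa using (this.neg).div_const (c * p)

theorem integrableOn_Ioi_rpow_sub_one_mul_exp_neg_mul_rpow (hc : 0 < c) (hp : 0 < p) (hr : 0 < r) :
    IntegrableOn (fun t => t ^ (p - 1) * exp (-c * t ^ p)) (Ioi r) :=
  integrableOn_Ioi_deriv_of_nonneg'
    (fun _ ht => hasDerivAt_neg_exp_neg_mul_rpow_div hc.ne' hp.ne' (hr.trans_le ht))
    (fun _ ht => mul_nonneg (rpow_nonneg (hr.trans ht).le _) (exp_pos _).le)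
    (tendsto_neg_exp_neg_mul_rpow_div hc hp)

theorem integral_Ioi_rpow_sub_one_mul_exp_neg_mul_rpow (hc : 0 < c) (hp : 0 < p) (hr : 0 < r) :
    ∫ t in Ioi r, t ^ (p - 1) * exp (-c * t ^ p) = exp (-c * r ^ p) / (c * p) := by
  rw [integral_Ioi_of_hasDerivAt_of_nonneg'
    (fun _ ht => hasDerivAt_neg_exp_neg_mul_rpow_div hc.ne' hp.ne' (hr.trans_le ht))
    (fun _ ht => mul_nonneg (rpow_nonneg (hr.trans ht).le _) (exp_pos _).le)
    (tendsto_neg_exp_neg_mul_rpow_div hc hp)]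
  ring

theorem integrableOn_Ioi_exp_neg_mul_rpow (hc : 0 < c) (hp : 1 ≤ p) (hr : 0 < r) :
    IntegrableOn (fun t => exp (-c * t ^ p)) (Ioi r) := by
  have hp₀ : 0 < p := by linarith
  refine ((integrableOn_Ioi_rpow_sub_one_mul_exp_neg_mul_rpow hc hp₀ hr).const_mul
    (r ^ (1 - p))).mono' (by fun_prop) ((ae_restrict_mem measurableSet_Ioi).mono fun t ht => ?_)
  rw [norm_of_nonneg (exp_pos _).le, ← mul_assoc]
  exact le_mul_of_one_le_left (exp_pos _).le
    (one_le_rpow_one_sub_mul_rpow_sub_one hp hr (le_of_lt ht))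

theorem integral_Ioi_exp_neg_mul_rpow_mul_exp_le (hc : 0 < c) (hp : 1 ≤ p) (hr : 0 < r) :
    (∫ t in Ioi r, exp (-c * t ^ p)) * exp (c * r ^ p) ≤ r ^ (1 - p) / (c * p) := by
  calc (∫ t in Ioi r, exp (-c * t ^ p)) * exp (c * r ^ p)
      ≤ (∫ t in Ioi r, r ^ (1 - p) * (t ^ (p - 1) * exp (-c * t ^ p))) * exp (c * r ^ p) := by
        gcongr ?_ * _
        refine setIntegral_mono_on (integrableOn_Ioi_exp_neg_mul_rpow hc hp hr)
          ((integrableOn_Ioi_rpow_sub_one_mul_exp_neg_mul_rpow hc (by linarith) hr).const_mul _)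
          measurableSet_Ioi fun t ht => ?_
        rw [← mul_assoc]
        exact le_mul_of_one_le_left (exp_pos _).le
          (one_le_rpow_one_sub_mul_rpow_sub_one hp hr (le_of_lt ht))
    _ = r ^ (1 - p) / (c * p) := by
        rw [integral_const_mul, integral_Ioi_rpow_sub_one_mul_exp_neg_mul_rpow hc (by linarith) hr,
          mul_div_assoc', div_mul_eq_mul_div, mul_assoc, ← exp_add]
        simp

theorem le_integral_Ioi_exp_neg_mul_rpow_mul_exp (hc : 0 < c) (hp : 1 ≤ p) (hr : 1 ≤ r) :
    2 ^ (1 - p) / (c * p) * (1 - exp (-c * (2 ^ p - 1))) * r ^ (1 - p) ≤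
      (∫ t in Ioi r, exp (-c * t ^ p)) * exp (c * r ^ p) := by
  have hr₀ : 0 < r := by linarith
  have hp₀ : 0 < p := by linarith
  have hk := integrableOn_Ioi_rpow_sub_one_mul_exp_neg_mul_rpow hc hp₀ hr₀
  have hFTC : ∫ t in Ioc r (2 * r), t ^ (p - 1) * exp (-c * t ^ p) =
      (exp (-c * r ^ p) - exp (-c * (2 * r) ^ p)) / (c * p) := by
    rw [← intervalIntegral.integral_of_le (by linarith),
      intervalIntegral.integral_eq_sub_of_hasDerivAt
        (fun t ht => hasDerivAt_neg_exp_neg_mul_rpow_div hc.ne' hp₀.ne'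
          (hr₀.trans_le (uIcc_of_le (by linarith : r ≤ 2 * r) ▸ ht).1))
        ((intervalIntegrable_iff_integrableOn_Ioc_of_le (by linarith)).2
          (hk.mono_set Ioc_subset_Ioi_self))]
    ring
  have hgap : exp (-c * (2 * r) ^ p) * exp (c * r ^ p) ≤ exp (-c * (2 ^ p - 1)) := by
    rw [← exp_add, exp_le_exp, mul_rpow (by norm_num) hr₀.le]
    have h₁ : 1 ≤ r ^ p := one_le_rpow hr hp₀.le
    have h₂ : 1 ≤ (2 : ℝ) ^ p := one_le_rpow (by norm_num) hp₀.le
    nlinarith [mul_nonneg (mul_nonneg hc.le (sub_nonneg.2 h₂)) (sub_nonneg.2 h₁)]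
  have hone : exp (-c * r ^ p) * exp (c * r ^ p) = 1 := by rw [← exp_add]; simp
  calc 2 ^ (1 - p) / (c * p) * (1 - exp (-c * (2 ^ p - 1))) * r ^ (1 - p)
      ≤ 2 ^ (1 - p) / (c * p) * (exp (-c * r ^ p) * exp (c * r ^ p) -
          exp (-c * (2 * r) ^ p) * exp (c * r ^ p)) * r ^ (1 - p) := by
        rw [hone]
        gcongr
    _ = (∫ t in Ioc r (2 * r), (2 * r) ^ (1 - p) * (t ^ (p - 1) * exp (-c * t ^ p))) *
          exp (c * r ^ p) := by
        rw [integral_const_mul, hFTC, mul_rpow (x := 2) (z := 1 - p) (by norm_num) hr₀.le]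
        ring
    _ ≤ (∫ t in Ioc r (2 * r), exp (-c * t ^ p)) * exp (c * r ^ p) := by
        gcongr ?_ * _
        refine setIntegral_mono_on ((hk.mono_set Ioc_subset_Ioi_self).const_mul _)
          ((integrableOn_Ioi_exp_neg_mul_rpow hc hp hr₀).mono_set Ioc_subset_Ioi_self)
          measurableSet_Ioc fun t ht => ?_
        rw [← mul_assoc]
        exact mul_le_of_le_one_left (exp_pos _).le (rpow_one_sub_mul_rpow_sub_one_le_one hp
          (hr₀.trans ht.1).le ht.2 (by linarith))
    _ ≤ (∫ t in Ioi r, exp (-c * t ^ p)) * exp (c * r ^ p) := by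
        gcongr ?_ * _
        exact setIntegral_mono_set (integrableOn_Ioi_exp_neg_mul_rpow hc hp hr₀)
          (Eventually.of_forall fun t => (exp_pos _).le) Ioc_subset_Ioi_self.eventuallyLE

theorem aestronglyMeasurable_integral_Ioi_exp_neg_mul_rpow (hc : 0 < c) (hp : 1 ≤ p) :
    AEStronglyMeasurable (fun r => ∫ t in Ioi r, exp (-c * t ^ p)) (volume.restrict (Ioi 0)) :=
  (aemeasurable_restrict_of_antitoneOn measurableSet_Ioi <| antitoneOn_setIntegral_Ioi
    (fun _ => (exp_pos _).le) fun _ hr =>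
      integrableOn_Ioi_exp_neg_mul_rpow hc hp hr).aestronglyMeasurable

theorem isTheta_integral_Ioi_exp_neg_mul_rpow_mul_exp (hc : 0 < c) (hp : 1 ≤ p) :
    (fun r => (∫ t in Ioi r, exp (-c * t ^ p)) * exp (c * r ^ p)) =Θ[𝓟 (Ioi 1)]
      fun r => r ^ (1 - p) := by
  have hG₀ (r : ℝ) : 0 ≤ (∫ t in Ioi r, exp (-c * t ^ p)) * exp (c * r ^ p) :=
    mul_nonneg (setIntegral_nonneg measurableSet_Ioi fun _ _ => (exp_pos _).le) (exp_pos _).le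
  set a := 2 ^ (1 - p) / (c * p) * (1 - exp (-c * (2 ^ p - 1)))
  have ha : 0 < a := by
    have : 0 < c * (2 ^ p - 1) := mul_pos hc (sub_pos.2 (one_lt_rpow (by norm_num) (by linarith)))
    have : exp (-c * (2 ^ p - 1)) < 1 := exp_lt_one_iff.2 (by linarith)
    have : 0 < p := by linarith
    positivity
  refine ⟨.of_bound (1 / (c * p)) (eventually_principal.2 fun r (hr : 1 < r) => ?_),
    .of_bound a⁻¹ (eventually_principal.2 fun r (hr : 1 < r) => ?_)⟩
  · rw [norm_of_nonneg (hG₀ r), norm_of_nonneg (rpow_nonneg (by linarith) _), one_div_mul_eq_div]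
    exact integral_Ioi_exp_neg_mul_rpow_mul_exp_le hc hp (by linarith)
  · rw [norm_of_nonneg (hG₀ r), norm_of_nonneg (rpow_nonneg (by linarith) _), le_inv_mul_iff₀ ha]
    exact le_integral_Ioi_exp_neg_mul_rpow_mul_exp hc hp hr.le

end StretchedExponential

/-- Sharpness of the decay assumption on the model manifold: for `γ > 0`, `c > 0`,
`p = 1 + γ/2`, the function
`r ↦ (∫_{r}^{∞} exp(-c t^p) dt) · (1+r)^{-α} · exp(c r^p)`
is integrable on `(1, ∞)` if and only if `α > 1 - γ/2`. -/
theorem model_manifold_sharpness (γ c α : ℝ) (hγ : 0 < γ) (hc : 0 < c) :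
    IntegrableOn
      (fun r : ℝ =>
        (∫ t in Set.Ioi r, Real.exp (-c * t ^ (1 + γ / 2))) * (1 + r) ^ (-α) *
          Real.exp (c * r ^ (1 + γ / 2)))
      (Set.Ioi (1 : ℝ)) ↔ 1 - γ / 2 < α := by
  have hp : 1 ≤ 1 + γ / 2 := by linarith
  have hΘ : (fun r : ℝ => (∫ t in Ioi r, exp (-c * t ^ (1 + γ / 2))) * (1 + r) ^ (-α) *
      exp (c * r ^ (1 + γ / 2))) =Θ[𝓟 (Ioi 1)] fun r => r ^ (1 - (1 + γ / 2) + -α) := by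
    refine EventuallyEq.trans_isTheta ?_ (((isTheta_integral_Ioi_exp_neg_mul_rpow_mul_exp hc hp).mul
      (isTheta_one_add_rpow (-α))).trans_eventuallyEq ?_)
    · exact Eventually.of_forall fun r => by ring
    · exact eventually_principal.2 fun r (hr : 1 < r) => (rpow_add (by linarith) _ _).symm
  rw [hΘ.integrableOn_iff measurableSet_Ioi ?_ (by fun_prop), integrableOn_Ioi_rpow_iff one_pos]
  · constructor <;> intro h <;> linarith
  · exact (((aestronglyMeasurable_integral_Ioi_exp_neg_mul_rpow hc hp).mono_set
      (Ioi_subset_Ioi zero_le_one)).mul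
      (by fun_prop : Measurable fun r : ℝ => (1 + r) ^ (-α)).aestronglyMeasurable).mul (by fun_prop)
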